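/- Let t > 0 be real, let v and K be positive integers with K ≤ v, and set s* = 1/2 − it, a = t/(2πv), b = −t/(4πv²), and c(j) = (K/v)^j · f_{s*}^{(j)}(0)/j! for each nonnegative integer j, where f_{s*}^{(j)} denotes the j-th complex derivative of f_{s*}. Then the series Σ_{j=0}^∞ c(j)·F(K, j; a, b) converges absolutely and Σ_{k=0}^{K−1} e^{i t·log(v+k)}/√(v+k) = (e^{i t·log v}/√v) · Σ_{j=0}^∞ c(j)·F(K, j; a, b). -/

import Mathlib

open Real Complex

/-- `f_s(z) = e^{(s−1/2)(z − z²/2)}/(1+z)^s`, holomorphic on the unit disc,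
with `(1+z)^s` the principal branch. -/
noncomputable def fRS (s : ℂ) (z : ℂ) : ℂ :=
  Complex.exp ((s - 1/2) * (z - z^2/2)) / (1+z)^s

/-- The normalized quadratic exponential sum
`F(K, j; a, b) = K^{−j} Σ_{k=0}^{K−1} k^j e^{2πiak + 2πibk²}`
(with `k^j = 1` when `k = j = 0`). -/
noncomputable def quadSum (K : ℕ) (j : ℕ) (a b : ℝ) : ℂ :=
  (1/(K:ℂ)^j) * ∑ k ∈ Finset.range K,
    (k:ℂ)^j * Complex.exp (2*(π:ℂ)*Complex.I*((a*k : ℝ):ℂ) + 2*(π:ℂ)*Complex.I*((b*k^2 : ℝ):ℂ))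


/-! For `v + k > 0` the `k`-th summand is `(v + k)^{-s*} = v^{-s*} (1 + k/v)^{-s*}`, and
`(1 + z)^{-s*} = f_{s*}(z) e^{it(z − z²/2)}`, whose exponential factor at `z = k/v` is the quadratic
phase `e^{2πi(ak + bk²)}`. For `k < v` the point `k/v` lies in the unit disc, where `f_{s*}` is
holomorphic, so `f_{s*}(k/v)` is the sum of its absolutely convergent Taylor series at `0`.
Summing these finitely many series over `k` gives the identity: the factor `K^{-j}` of
`F(K, j; a, b)` cancels against `(K/v)^j`, leaving `(k/v)^j`. -/

open Nat in
theorem Complex.summable_norm_taylorSeries_on_ball {E : Type*} [NormedAddCommGroup E]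
    [NormedSpace ℂ E] [CompleteSpace E] {f : ℂ → E} {c : ℂ} {r : ℝ}
    (hf : DifferentiableOn ℂ f (Metric.ball c r)) {z : ℂ} (hz : z ∈ Metric.ball c r) :
    Summable fun n : ℕ ↦ ‖(n ! : ℂ)⁻¹ • (z - c) ^ n • iteratedDeriv n f c‖ := by
  obtain ⟨r', hzr', hr'⟩ := exists_between (Metric.mem_ball.mp hz)
  lift r' to NNReal using (dist_nonneg.trans hzr'.le)
  have hp := (hf.mono (Metric.closedBall_subset_ball hr')).hasFPowerSeriesOnBall
    (dist_nonneg.trans_lt hzr')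
  have hz' : z - c ∈ Metric.eball (0 : ℂ) (cauchyPowerSeries f c r').radius := by
    refine Metric.eball_subset_eball hp.r_le ?_
    rwa [Metric.eball_coe, mem_ball_zero_iff, ← dist_eq_norm]
  refine ((cauchyPowerSeries f c r').summable_norm_apply hz').congr fun n ↦ ?_
  have hdiag : (z - c) ^ n • iteratedDeriv n f c = iteratedFDeriv ℂ n f c (fun _ ↦ z - c) := by
    simpa [iteratedDeriv_eq_iteratedFDeriv] using
      ((iteratedFDeriv ℂ n f c).map_smul_univ (fun _ ↦ z - c) (fun _ ↦ 1)).symm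
  rw [hdiag, ← hp.factorial_smul, ← Nat.cast_smul_eq_nsmul ℂ,
    inv_smul_smul₀ (Nat.cast_ne_zero.mpr n.factorial_ne_zero)]

theorem fRS_differentiableOn (s : ℂ) : DifferentiableOn ℂ (fRS s) (Metric.ball 0 1) := by
  intro z hz
  have hre : 0 < (1 + z).re := by
    have := neg_lt_of_abs_lt ((abs_re_le_norm z).trans_lt (mem_ball_zero_iff.mp hz))
    simp only [add_re, one_re]
    linarith
  have hslit : 1 + z ∈ slitPlane := mem_slitPlane_iff.mpr (Or.inl hre)
  refine DifferentiableAt.differentiableWithinAt (.div (by fun_prop) ?_ ?_)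
  · exact (differentiableAt_id.const_add 1).cpow (differentiableAt_const s) hslit
  · exact cpow_ne_zero_iff.mpr (Or.inl (slitPlane_ne_zero hslit))

theorem one_add_cpow_neg_eq_fRS_mul (s z : ℂ) :
    (1 + z) ^ (-s) = fRS s z * Complex.exp (-(s - 1/2) * (z - z^2/2)) := by
  rw [fRS, cpow_neg, div_mul_eq_mul_div, ← Complex.exp_add, neg_mul, add_neg_cancel,
    Complex.exp_zero, one_div]

theorem cexp_I_mul_log_div_sqrt {w : ℝ} (hw : 0 < w) (t : ℝ) :
    Complex.exp (I * t * (Real.log w : ℂ)) / ((√w : ℝ) : ℂ) = (w : ℂ) ^ (-(1/2 - t * I)) := by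
  have hw0 : (w : ℂ) ≠ 0 := ofReal_ne_zero.mpr hw.ne'
  rw [Real.sqrt_eq_rpow, ofReal_cpow hw.le, neg_sub, cpow_sub _ _ hw0]
  simp only [cpow_def_of_ne_zero hw0, ← ofReal_log hw.le]
  push_cast
  ring_nf

noncomputable def quadPhase (a b x : ℝ) : ℂ :=
  Complex.exp (2*(π:ℂ)*Complex.I*((a*x : ℝ):ℂ) + 2*(π:ℂ)*Complex.I*((b*x^2 : ℝ):ℂ))

theorem norm_quadPhase (a b x : ℝ) : ‖quadPhase a b x‖ = 1 := by
  simp [quadPhase, norm_exp, -ofReal_pow]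

theorem quadPhase_eq_exp (t u x : ℝ) :
    quadPhase (t/(2*π*u)) (-t/(4*π*u^2)) x
      = Complex.exp (-((1/2 - t * I) - 1/2) * ((x / u : ℂ) - (x / u : ℂ)^2/2)) := by
  rw [quadPhase]
  congr 1
  push_cast
  field_simp
  ring

theorem cexp_I_mul_log_add_div_sqrt {u x : ℝ} (hu : 0 < u) (hux : 0 < u + x) (t : ℝ) :
    Complex.exp (I * t * (Real.log (u + x) : ℂ)) / ((√(u + x) : ℝ) : ℂ)
      = Complex.exp (I * t * (Real.log u : ℂ)) / ((√u : ℝ) : ℂ)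
        * (fRS (1/2 - t * I) (x / u) * quadPhase (t/(2*π*u)) (-t/(4*π*u^2)) x) := by
  have hsplit : u + x = u * (1 + x / u) := by field_simp
  have h1 : 0 ≤ 1 + x / u := by rw [hsplit] at hux; exact (pos_of_mul_pos_right hux hu.le).le
  rw [cexp_I_mul_log_div_sqrt hux, cexp_I_mul_log_div_sqrt hu, quadPhase_eq_exp,
    ← one_add_cpow_neg_eq_fRS_mul, hsplit, ofReal_mul, mul_cpow_ofReal_nonneg hu.le h1]
  push_cast
  rfl

theorem pow_mul_quadSum {K : ℕ} (hK : K ≠ 0) (w : ℂ) (j : ℕ) (a b : ℝ) :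
    ((K : ℂ) * w) ^ j * quadSum K j a b
      = ∑ k ∈ Finset.range K, ((k : ℂ) * w) ^ j * quadPhase a b k := by
  have hK' : (K : ℂ) ≠ 0 := Nat.cast_ne_zero.mpr hK
  rw [quadSum, ← mul_assoc, mul_pow, Finset.mul_sum]
  refine Finset.sum_congr rfl fun k _ ↦ ?_
  rw [quadPhase]
  field_simp
  ring

theorem stmt_10_general (t : ℝ) (v K : ℕ) (hv : 0 < v) (hK : 0 < K) (hKv : K ≤ v) :
    Summable (fun j : ℕ =>
      ‖(((K:ℂ)/(v:ℂ))^j * iteratedDeriv j (fRS (1/2 - t * Complex.I)) 0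
          / (Nat.factorial j : ℂ))
        * quadSum K j (t/(2*π*v)) (-t/(4*π*v^2))‖) ∧
    ∑ k ∈ Finset.range K,
        Complex.exp (Complex.I * (t:ℂ) * (Real.log ((v:ℝ) + (k:ℝ)) : ℂ))
          / ((Real.sqrt ((v:ℝ) + (k:ℝ)) : ℝ) : ℂ)
      = (Complex.exp (Complex.I * (t:ℂ) * (Real.log (v:ℝ) : ℂ)) / ((Real.sqrt (v:ℝ) : ℝ) : ℂ))
        * ∑' j : ℕ,
            (((K:ℂ)/(v:ℂ))^j * iteratedDeriv j (fRS (1/2 - t * Complex.I)) 0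
                / (Nat.factorial j : ℂ))
              * quadSum K j (t/(2*π*v)) (-t/(4*π*v^2)) := by
  set f := fRS (1/2 - t * I)
  set a := t/(2*π*v)
  set b := -t/(4*π*v^2)
  have hf := fRS_differentiableOn (1/2 - t * I)
  have hball : ∀ k ∈ Finset.range K, (k / v : ℂ) ∈ Metric.ball 0 1 := fun k hk ↦ by
    rw [mem_ball_zero_iff, norm_div, Complex.norm_natCast, Complex.norm_natCast,
      div_lt_one (by positivity)]
    exact_mod_cast (Finset.mem_range.mp hk).trans_le hKv
  have hterm : ∀ j, ((K:ℂ)/(v:ℂ))^j * iteratedDeriv j f 0 / (j.factorial : ℂ) * quadSum K j a b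
      = ∑ k ∈ Finset.range K,
          (j.factorial : ℂ)⁻¹ • ((k / v : ℂ) - 0) ^ j • iteratedDeriv j f 0 * quadPhase a b k := by
    intro j
    trans iteratedDeriv j f 0 / j.factorial * (((K : ℂ) * (v : ℂ)⁻¹) ^ j * quadSum K j a b)
    · ring
    rw [pow_mul_quadSum hK.ne', Finset.mul_sum]
    refine Finset.sum_congr rfl fun k _ ↦ ?_
    simp only [smul_eq_mul, sub_zero, div_eq_mul_inv]
    ring
  refine ⟨.of_nonneg_of_le (fun _ ↦ norm_nonneg _) (fun j ↦ ?_)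
    (summable_sum fun k hk ↦ Complex.summable_norm_taylorSeries_on_ball hf (hball k hk)), ?_⟩
  · rw [hterm]
    refine (norm_sum_le _ _).trans_eq (Finset.sum_congr rfl fun k _ ↦ ?_)
    rw [norm_mul, norm_quadPhase, mul_one]
  · have hsum := hasSum_sum fun k hk ↦
      (Complex.hasSum_taylorSeries_on_ball hf (hball k hk)).mul_right (quadPhase a b k)
    have hv' : (0 : ℝ) < v := by exact_mod_cast hv
    rw [Finset.sum_congr rfl fun k _ ↦ cexp_I_mul_log_add_div_sqrt hv' (by positivity) t,
      ← Finset.mul_sum, funext hterm, hsum.tsum_eq]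
    simp only [ofReal_natCast]
    rfl

/-- Let `t > 0`, `v, K` positive integers with `K ≤ v`, `s* = 1/2 − it`,
`a = t/(2πv)`, `b = −t/(4πv²)`, `c(j) = (K/v)^j f_{s*}^{(j)}(0)/j!`. Then
`Σ_j c(j) F(K, j; a, b)` converges absolutely and
`Σ_{k=0}^{K−1} e^{it log(v+k)}/√(v+k) = (e^{it log v}/√v) Σ_{j=0}^∞ c(j) F(K, j; a, b)`. -/
theorem stmt_10 (t : ℝ) (ht : 0 < t) (v K : ℕ) (hv : 0 < v) (hK : 0 < K) (hKv : K ≤ v) :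
    Summable (fun j : ℕ =>
      ‖(((K:ℂ)/(v:ℂ))^j * iteratedDeriv j (fRS (1/2 - t * Complex.I)) 0
          / (Nat.factorial j : ℂ))
        * quadSum K j (t/(2*π*v)) (-t/(4*π*v^2))‖) ∧
    ∑ k ∈ Finset.range K,
        Complex.exp (Complex.I * (t:ℂ) * (Real.log ((v:ℝ) + (k:ℝ)) : ℂ))
          / ((Real.sqrt ((v:ℝ) + (k:ℝ)) : ℝ) : ℂ)
      = (Complex.exp (Complex.I * (t:ℂ) * (Real.log (v:ℝ) : ℂ)) / ((Real.sqrt (v:ℝ) : ℝ) : ℂ))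
        * ∑' j : ℕ,
            (((K:ℂ)/(v:ℂ))^j * iteratedDeriv j (fRS (1/2 - t * Complex.I)) 0
                / (Nat.factorial j : ℂ))
              * quadSum K j (t/(2*π*v)) (-t/(4*π*v^2)) :=
  stmt_10_general t v K hv hK hKv
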